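/- arXiv:2104.07105 — 2 statements merged into one kernel-verified Lean document; each statement's English description precedes it below -/
import Mathlib

section
/- Suppose V, s and trajectory x : ℕ → ℝⁿ satisfy the dissipation inequality V(x(k+1)) − V(x(k)) ≤ s(x(k)) for all k and the cyclic negativity condition Σ_{i=0}^{M−1} s(x(k+i)) ≤ −α_s(‖x(k)‖) for all k, with α_s ∈ 𝒦∞, and V ≥ 0 along the trajectory. Then the series Σ_{k=0}^{∞} α_s(‖x(k)‖) converges, and consequently lim_{k→∞} α_s(‖x(k)‖) = 0. -/
open Filter Finset NNReal Topology

/-! Telescoping the dissipation inequality over a window of length `M` and using the cyclic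
negativity condition gives `α_s(‖x k‖) ≤ V(x k) - V(x (k + M))`. Summed over `k < N`, the right
side telescopes to at most `V(x 0) + ⋯ + V(x (M - 1))` because `V ≥ 0` along the trajectory, so
the nonnegative series `∑ α_s(‖x k‖)` has bounded partial sums. -/

def ClassK (φ : ℝ≥0 → ℝ≥0) : Prop :=
  Continuous φ ∧ StrictMono φ ∧ φ 0 = 0

def ClassKInf (φ : ℝ≥0 → ℝ≥0) : Prop :=
  ClassK φ ∧ Filter.Tendsto φ Filter.atTop Filter.atTop

theorem sub_le_sum_range_of_sub_le {α : Type*} [AddCommGroup α] [PartialOrder α]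
    [IsOrderedAddMonoid α] {f g : ℕ → α} (h : ∀ k, f (k + 1) - f k ≤ g k) (k M : ℕ) :
    f (k + M) - f k ≤ ∑ i ∈ range M, g (k + i) := by
  have htel : ∑ i ∈ range M, (f (k + i + 1) - f (k + i)) = f (k + M) - f k :=
    sum_range_sub (fun i => f (k + i)) M
  exact htel ▸ sum_le_sum fun i _ => h (k + i)

theorem sum_range_sub_shift {α : Type*} [AddCommGroup α] (v : ℕ → α) (N M : ℕ) :
    ∑ k ∈ range N, (v k - v (k + M)) = ∑ k ∈ range M, v k - ∑ k ∈ range M, v (N + k) := by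
  have hsplit := (sum_range_add v N M).symm.trans (add_comm N M ▸ sum_range_add v M N)
  simp_rw [sum_sub_distrib, add_comm _ M, sub_eq_sub_iff_add_eq_add]
  rw [hsplit, add_comm]

theorem summable_of_le_sub_shift {a v : ℕ → ℝ} {M : ℕ} (ha : ∀ k, 0 ≤ a k) (hv : ∀ k, 0 ≤ v k)
    (h : ∀ k, a k ≤ v k - v (k + M)) : Summable a := by
  refine summable_of_sum_range_le ha (c := ∑ k ∈ range M, v k) fun N => ?_
  calc ∑ k ∈ range N, a k ≤ ∑ k ∈ range N, (v k - v (k + M)) := sum_le_sum fun k _ => h k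
    _ = ∑ k ∈ range M, v k - ∑ k ∈ range M, v (N + k) := sum_range_sub_shift v N M
    _ ≤ ∑ k ∈ range M, v k := sub_le_self _ (sum_nonneg fun k _ => hv (N + k))

theorem stmt_9_general {n : ℕ} (x : ℕ → EuclideanSpace ℝ (Fin n)) (V s : EuclideanSpace ℝ (Fin n) → ℝ)
    (M : ℕ) (αs : ℝ≥0 → ℝ≥0)
    (hV : ∀ k : ℕ, 0 ≤ V (x k))
    (hdiss : ∀ k : ℕ, V (x (k + 1)) - V (x k) ≤ s (x k))
    (hsup : ∀ k : ℕ, ∑ i ∈ Finset.range M, s (x (k + i)) ≤ -(αs ‖x k‖₊ : ℝ)) :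
    Summable (fun k : ℕ => (αs ‖x k‖₊ : ℝ)) ∧
    Filter.Tendsto (fun k : ℕ => (αs ‖x k‖₊ : ℝ)) Filter.atTop (nhds 0) := by
  have hdecrease : ∀ k, (αs ‖x k‖₊ : ℝ) ≤ V (x k) - V (x (k + M)) := fun k => by
    linarith [sub_le_sum_range_of_sub_le (f := fun k => V (x k)) hdiss k M, hsup k]
  have hsum := summable_of_le_sub_shift (fun k => NNReal.coe_nonneg _) hV hdecrease
  exact ⟨hsum, hsum.tendsto_atTop_zero⟩

theorem stmt_9 {n : ℕ} (x : ℕ → EuclideanSpace ℝ (Fin n)) (V s : EuclideanSpace ℝ (Fin n) → ℝ)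
    (M : ℕ) (hM : 1 ≤ M) (αs : ℝ≥0 → ℝ≥0) (hαs : ClassKInf αs)
    (hV : ∀ k : ℕ, 0 ≤ V (x k))
    (hdiss : ∀ k : ℕ, V (x (k + 1)) - V (x k) ≤ s (x k))
    (hsup : ∀ k : ℕ, ∑ i ∈ Finset.range M, s (x (k + i)) ≤ -(αs ‖x k‖₊ : ℝ)) :
    Summable (fun k : ℕ => (αs ‖x k‖₊ : ℝ)) ∧
    Filter.Tendsto (fun k : ℕ => (αs ‖x k‖₊ : ℝ)) Filter.atTop (nhds 0) :=
  stmt_9_general x V s M αs hV hdiss hsup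
end

section
/- Asymptotic convergence from cyclic dissipativity: let x : ℕ → ℝⁿ be contained in a compact set X, let V : ℝⁿ → ℝ satisfy α₁(‖x‖) ≤ V(x) ≤ α₂(‖x‖) on X for some α₁, α₂ ∈ 𝒦∞, let s : ℝⁿ → ℝ satisfy V(x(k+1)) − V(x(k)) ≤ s(x(k)) for all k, and suppose there exist M ≥ 1 and α_s ∈ 𝒦∞ with Σ_{i=0}^{M−1} s(x(k+i)) ≤ −α_s(‖x(k)‖) for all k. Then lim_{k→∞} x(k) = 0. -/
/-!
Summing the dissipation inequality over a window of length `M` gives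
`V(x(k+M)) - V(x(k)) ≤ -αs ‖x(k)‖`. Hence the window sums `W k = ∑_{i<M} V(x(k+i))`, which are
nonnegative because `V ≥ α₁ ∘ ‖·‖ ≥ 0` on `X`, decrease by at least `αs ‖x(k)‖` at each step.
So `∑ₖ αs ‖x(k)‖` is finite, `αs ‖x(k)‖ → 0`, and since `αs` is strictly increasing with
`αs 0 = 0`, `‖x(k)‖ → 0`.
-/

open Filter Finset NNReal Topology

lemma sub_le_sum_range_of_forall_succ_sub_le {G : Type*} [AddCommGroup G] [PartialOrder G]
    [IsOrderedAddMonoid G] {v σ : ℕ → G} (h : ∀ k, v (k + 1) - v k ≤ σ k)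
    (k M : ℕ) : v (k + M) - v k ≤ ∑ i ∈ range M, σ (k + i) := by
  calc v (k + M) - v k = ∑ i ∈ range M, (v (k + (i + 1)) - v (k + i)) :=
        (sum_range_sub (fun i => v (k + i)) M).symm
    _ ≤ ∑ i ∈ range M, σ (k + i) := sum_le_sum fun i _ => h (k + i)

lemma sum_range_add_one_sub_sum_range {G : Type*} [AddCommGroup G] (v : ℕ → G) (k M : ℕ) :
    ∑ i ∈ range M, v (k + 1 + i) - ∑ i ∈ range M, v (k + i) = v (k + M) - v k := by
  rw [← sum_sub_distrib]
  simp only [add_right_comm k 1, add_assoc k _ 1]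
  exact sum_range_sub (fun i => v (k + i)) M

lemma summable_of_le_sub_succ {f W : ℕ → ℝ} (hf : ∀ k, 0 ≤ f k) (hW : ∀ k, 0 ≤ W k)
    (h : ∀ k, f k ≤ W k - W (k + 1)) : Summable f := by
  refine summable_of_sum_range_le (c := W 0) hf fun N => ?_
  calc ∑ k ∈ range N, f k ≤ ∑ k ∈ range N, (W k - W (k + 1)) := sum_le_sum fun k _ => h k
    _ = W 0 - W N := sum_range_sub' W N
    _ ≤ W 0 := sub_le_self _ (hW N)

lemma tendsto_zero_of_tendsto_comp_nnnorm {ι E : Type*} [SeminormedAddCommGroup E] {l : Filter ι}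
    {φ : ℝ≥0 → ℝ≥0} (hφ : StrictMono φ) (hφ0 : φ 0 = 0) {x : ι → E}
    (h : Tendsto (fun k => φ ‖x k‖₊) l (𝓝 0)) : Tendsto x l (𝓝 0) := by
  have hnorm : Tendsto (fun k => ‖x k‖₊) l (𝓝 0) := by
    refine tendsto_order.2 ⟨fun a ha => absurd ha not_lt_zero, fun ε hε => ?_⟩
    have hφε : 0 < φ ε := hφ0 ▸ hφ hε
    filter_upwards [(tendsto_order.1 h).2 _ hφε] with k hk using hφ.lt_iff_lt.1 hk
  rw [tendsto_zero_iff_norm_tendsto_zero]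
  exact NNReal.tendsto_coe.2 hnorm

theorem stmt_10_general {n : ℕ} (x : ℕ → EuclideanSpace ℝ (Fin n)) (V s : EuclideanSpace ℝ (Fin n) → ℝ)
    (X : Set (EuclideanSpace ℝ (Fin n))) (hxX : ∀ k : ℕ, x k ∈ X)
    (α₁ α₂ : ℝ≥0 → ℝ≥0)
    (hVbounds : ∀ y ∈ X, (α₁ ‖y‖₊ : ℝ) ≤ V y ∧ V y ≤ (α₂ ‖y‖₊ : ℝ))
    (hdiss : ∀ k : ℕ, V (x (k + 1)) - V (x k) ≤ s (x k))
    (M : ℕ) (αs : ℝ≥0 → ℝ≥0) (hαs : ClassKInf αs)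
    (hsup : ∀ k : ℕ, ∑ i ∈ Finset.range M, s (x (k + i)) ≤ -(αs ‖x k‖₊ : ℝ)) :
    Filter.Tendsto x Filter.atTop (nhds 0) := by
  have hV_nonneg : ∀ k, 0 ≤ V (x k) := fun k =>
    (α₁ ‖x k‖₊).coe_nonneg.trans (hVbounds (x k) (hxX k)).1
  set W : ℕ → ℝ := fun k => ∑ i ∈ range M, V (x (k + i))
  have hW_decrease : ∀ k, (αs ‖x k‖₊ : ℝ) ≤ W k - W (k + 1) := fun k => by
    have hwindow := sub_le_sum_range_of_forall_succ_sub_le (v := fun k => V (x k)) hdiss k M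
    linarith [sum_range_add_one_sub_sum_range (fun k => V (x k)) k M, hsup k]
  have hsummable : Summable fun k => (αs ‖x k‖₊ : ℝ) :=
    summable_of_le_sub_succ (fun k => (αs _).coe_nonneg)
      (fun k => sum_nonneg fun i _ => hV_nonneg (k + i)) hW_decrease
  exact tendsto_zero_of_tendsto_comp_nnnorm hαs.1.2.1 hαs.1.2.2
    (NNReal.tendsto_coe.1 hsummable.tendsto_atTop_zero)

theorem stmt_10 {n : ℕ} (x : ℕ → EuclideanSpace ℝ (Fin n)) (V s : EuclideanSpace ℝ (Fin n) → ℝ)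
    (X : Set (EuclideanSpace ℝ (Fin n))) (hX : IsCompact X) (hxX : ∀ k : ℕ, x k ∈ X)
    (α₁ α₂ : ℝ≥0 → ℝ≥0) (hα₁ : ClassKInf α₁) (hα₂ : ClassKInf α₂)
    (hVbounds : ∀ y ∈ X, (α₁ ‖y‖₊ : ℝ) ≤ V y ∧ V y ≤ (α₂ ‖y‖₊ : ℝ))
    (hdiss : ∀ k : ℕ, V (x (k + 1)) - V (x k) ≤ s (x k))
    (M : ℕ) (hM : 1 ≤ M) (αs : ℝ≥0 → ℝ≥0) (hαs : ClassKInf αs)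
    (hsup : ∀ k : ℕ, ∑ i ∈ Finset.range M, s (x (k + i)) ≤ -(αs ‖x k‖₊ : ℝ)) :
    Filter.Tendsto x Filter.atTop (nhds 0) :=
  stmt_10_general x V s X hxX α₁ α₂ hVbounds hdiss M αs hαs hsup
end
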